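/- The coproduct Δ_e, dual to the 'under' product on planar binary trees and extended multiplicatively, is coassociative, making the free associative algebra H^e = ℂ⟨Y⟩/(1 − ∥) into a graded connected Hopf algebra. -/

import Mathlib

open TensorProduct

inductive PBT : Type
  | leaf : PBT
  | node : PBT → PBT → PBT
deriving DecidableEq

namespace PBT

def order : PBT → ℕ
  | leaf => 0
  | node l r => order l + order r + 1

def over' : PBT → PBT → PBT
  | t, leaf => t
  | t, node l r => node (over' t l) r

def under : PBT → PBT → PBT
  | leaf, s => s
  | node l r, s => node l (under r s)

theorem over_assoc (a b c : PBT) : over' (over' a b) c = over' a (over' b c) := by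
  induction c with
  | leaf => rfl
  | node l r ihl ihr => simp only [over', ihl]

theorem over_one (a : PBT) : over' leaf a = a := by
  induction a with
  | leaf => rfl
  | node l r ihl ihr => simp only [over', ihl]

/-- The monoid of planar binary trees under the `over` product, with unit the root tree. -/
instance : Monoid PBT where
  mul := over'
  one := leaf
  mul_assoc := over_assoc
  one_mul := over_one
  mul_one _ := rfl

/-- The list of generators of a tree in the free monoid (Y, /):
t = V(s₁) / ⋯ / V(sₙ) corresponds to the multiset {s₁, …, sₙ} in the abelianization. -/
def gens : PBT → Multiset PBT
  | leaf => 0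
  | node l r => gens l + {r}

def encode : PBT → ℕ
  | leaf => 0
  | node l r => Nat.pair (encode l) (encode r) + 1

theorem encode_injective : Function.Injective encode := by
  intro a
  induction a with
  | leaf =>
    intro b h
    cases b with
    | leaf => rfl
    | node l r => simp [encode] at h
  | node l r ihl ihr =>
    intro b h
    cases b with
    | leaf => simp [encode] at h
    | node l' r' =>
      simp only [encode, Nat.add_right_cancel_iff] at h
      obtain ⟨h1, h2⟩ := Nat.pair_eq_pair.mp h
      exact congrArg₂ PBT.node (ihl h1) (ihr h2)

noncomputable instance : LinearOrder PBT := LinearOrder.lift' encode encode_injective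

end PBT

open PBT TensorProduct

/-- Nontrivial planar binary trees (the generators of the free algebra H^e). -/
abbrev PBTne : Type := {t : PBT // t ≠ PBT.leaf}

/-- The electron propagator algebra H^e = ℂ⟨Y⟩/(1 − ∥): the free associative algebra
on the planar binary trees with the root tree identified with the unit; its basis is
the set of words in nontrivial trees. -/
noncomputable abbrev He : Type := MonoidAlgebra ℂ (FreeMonoid PBTne)

/-- A tree as an element of H^e (the root tree is the unit). -/
noncomputable def ofTree (t : PBT) : He :=
  if h : t = PBT.leaf then 1 else MonoidAlgebra.single (FreeMonoid.of ⟨t, h⟩) 1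

/-- The list of decompositions t = t₁ \ t₂ of a tree for the `under` product;
it enumerates exactly the pairs (t₁, t₂) with t₁ \ t₂ = t, without repetition. -/
def ecuts : PBT → List (PBT × PBT)
  | .leaf => [(.leaf, .leaf)]
  | .node l r =>
      (PBT.leaf, PBT.node l r) :: (ecuts r).map (fun p => (PBT.node l p.1, p.2))

/-- The coproduct Δ^p_e dual to the `under` product, on a single tree:
Δ^p_e(t) = Σ_{t = t₁ \ t₂} t₁ ⊗ t₂. -/
noncomputable def comulETree (t : PBT) : He ⊗[ℂ] He :=
  ((ecuts t).map fun p => ofTree p.1 ⊗ₜ[ℂ] ofTree p.2).sum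

/-- The coproduct Δ^p_e of H^e: the multiplicative (algebra-morphism) extension of the
coproduct dual to the `under` product. -/
noncomputable def comulE : He →ₐ[ℂ] (He ⊗[ℂ] He) :=
  (MonoidAlgebra.lift ℂ (He ⊗[ℂ] He) (FreeMonoid PBTne))
    (FreeMonoid.lift fun t => comulETree t.1)

/-- The counit of H^e: sends the root tree ∥ to 1 and every other tree to 0,
extended as an algebra morphism. -/
noncomputable def counitE : He →ₐ[ℂ] ℂ :=
  (MonoidAlgebra.lift ℂ ℂ (FreeMonoid PBTne)) (FreeMonoid.lift fun _ => (0 : ℂ))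

/-- The degree of a basis word of H^e: the sum of the orders of its letters. -/
def degWord (w : FreeMonoid PBTne) : ℕ := (w.toList.map fun t => t.1.order).sum

open PBT

theorem under_order (a b : PBT) : (under a b).order = a.order + b.order := by
  induction a with
  | leaf => simp [under, order]
  | node l r ihl ihr => simp [under, order, ihr]; omega

theorem mem_ecuts (t : PBT) (p : PBT × PBT) : p ∈ ecuts t ↔ under p.1 p.2 = t := by
  induction t generalizing p with
  | leaf =>
    simp only [ecuts, List.mem_singleton]
    constructor
    · rintro rfl; rfl
    · intro h
      obtain ⟨a, b⟩ := p
      cases a with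
      | leaf => cases h; rfl
      | node l r => simp [under] at h
  | node l r ihl ihr =>
    obtain ⟨a, b⟩ := p
    simp only [ecuts, List.mem_cons, List.mem_map]
    constructor
    · rintro (h | ⟨q, hq, h⟩)
      · cases h; rfl
      · obtain ⟨h1, h2⟩ := Prod.mk.injEq .. ▸ h
        subst h2
        cases h1
        simp only [under, (ihr q).mp hq]
    · intro h
      cases a with
      | leaf => left; simp [under] at h; simp [h]
      | node c d =>
        right
        simp only [under, PBT.node.injEq] at h
        exact ⟨(d, b), (ihr (d, b)).mpr h.2, by simp [h.1]⟩

theorem ecuts_nodup (t : PBT) : (ecuts t).Nodup := by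
  induction t with
  | leaf => exact List.nodup_singleton _
  | node l r ihl ihr =>
    simp only [ecuts, List.nodup_cons]
    refine ⟨?_, ihr.map ?_⟩
    · simp only [List.mem_map, not_exists]
      rintro q ⟨hq, h⟩
      exact absurd (congrArg Prod.fst h) (by simp)
    · intro p q h
      simp only [Prod.mk.injEq, PBT.node.injEq] at h
      exact Prod.ext h.1.2 h.2
theorem comulE_single_of (t : PBTne) :
    comulE (MonoidAlgebra.single (FreeMonoid.of t) 1) = comulETree t.1 := by
  simp [comulE, MonoidAlgebra.lift_single, FreeMonoid.lift_eval_of]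

theorem comulE_ofTree (t : PBT) : comulE (ofTree t) = comulETree t := by
  by_cases h : t = PBT.leaf
  · subst h
    simp [ofTree, comulETree, ecuts, Algebra.TensorProduct.one_def]
  · rw [ofTree, dif_neg h, comulE_single_of]

/-- counit on a tree -/
theorem counitE_single_of (t : PBTne) :
    counitE (MonoidAlgebra.single (FreeMonoid.of t) 1) = 0 := by
  simp [counitE, MonoidAlgebra.lift_single, FreeMonoid.lift_eval_of]

theorem counitE_ofTree (t : PBT) :
    counitE (ofTree t) = if t = PBT.leaf then 1 else 0 := by
  by_cases h : t = PBT.leaf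
  · simp [ofTree, h]
  · simp [ofTree, h, counitE_single_of]

section sums
variable {M : Type*} [AddCommMonoid M]

theorem ecuts_sum_snd_leaf (t : PBT) (g : PBT → M) :
    ((ecuts t).map fun p => if p.2 = PBT.leaf then g p.1 else 0).sum = g t := by
  induction t generalizing g with
  | leaf => simp [ecuts]
  | node l r ihl ihr =>
    simp only [ecuts, List.map_cons, List.map_map, List.sum_cons]
    rw [if_neg (by simp)]
    rw [zero_add]
    have := ihr (fun a => g (PBT.node l a))
    rw [← this]
    congr 1

theorem ecuts_sum_fst_leaf (t : PBT) (g : PBT → M) :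
    ((ecuts t).map fun p => if p.1 = PBT.leaf then g p.2 else 0).sum = g t := by
  induction t generalizing g with
  | leaf => simp [ecuts]
  | node l r ihl ihr =>
    simp only [ecuts, List.map_cons, List.map_map, List.sum_cons]
    rw [if_pos trivial]
    have : ((ecuts r).map ((fun p => if p.1 = PBT.leaf then g p.2 else 0) ∘
        fun p => (PBT.node l p.1, p.2))).sum = 0 := by
      rw [List.sum_eq_zero]
      intro x hx
      simp only [List.mem_map] at hx
      obtain ⟨q, hq, rfl⟩ := hx
      simp
    rw [this, add_zero]
end sums
/-- Triple decompositions, cutting the first factor further. -/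
def tcutsL (t : PBT) : List (PBT × PBT × PBT) :=
  (ecuts t).flatMap fun p => (ecuts p.1).map fun q => (q.1, q.2, p.2)

/-- Triple decompositions, cutting the second factor further. -/
def tcutsR (t : PBT) : List (PBT × PBT × PBT) :=
  (ecuts t).flatMap fun p => (ecuts p.2).map fun q => (p.1, q.1, q.2)

theorem tcuts_perm (t : PBT) : (tcutsL t).Perm (tcutsR t) := by
  induction t with
  | leaf => simp [tcutsL, tcutsR, ecuts]
  | node l r ihl ihr =>
    set F : PBT × PBT × PBT → PBT × PBT × PBT :=
      fun x => (PBT.node l x.1, x.2.1, x.2.2) with hF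
    have hL : tcutsL (PBT.node l r) =
        (PBT.leaf, PBT.leaf, PBT.node l r) ::
          (ecuts r).flatMap (fun p =>
            (PBT.leaf, PBT.node l p.1, p.2) ::
              (ecuts p.1).map fun q => (PBT.node l q.1, q.2, p.2)) := by
      simp only [tcutsL, ecuts, List.flatMap_cons, List.flatMap_map, List.map_cons,
        List.map_map, List.map_nil, List.singleton_append]
      rfl
    have hR : tcutsR (PBT.node l r) =
        (PBT.leaf, PBT.leaf, PBT.node l r) ::
          ((ecuts r).map (fun p => (PBT.leaf, PBT.node l p.1, p.2)) ++
            (ecuts r).flatMap fun p =>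
              (ecuts p.2).map fun q => (PBT.node l p.1, q.1, q.2)) := by
      simp only [tcutsR, ecuts, List.flatMap_cons, List.flatMap_map, List.map_cons,
        List.map_map]
      rfl
    rw [hL, hR]
    refine List.Perm.cons _ ?_
    refine List.Perm.trans (List.map_append_flatMap_perm _ _ _).symm ?_
    refine List.Perm.append_left _ ?_
    have h1 : (ecuts r).flatMap (fun p =>
        (ecuts p.1).map fun q => (PBT.node l q.1, q.2, p.2)) = (tcutsL r).map F := by
      simp only [tcutsL, List.map_flatMap, List.map_map]
      rfl
    have h2 : ((ecuts r).flatMap fun p =>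
        (ecuts p.2).map fun q => (PBT.node l p.1, q.1, q.2)) = (tcutsR r).map F := by
      simp only [tcutsR, List.map_flatMap, List.map_map]
      rfl
    rw [h1, h2]
    exact ihr.map F
section tensorsums
variable {M N : Type*} [AddCommMonoid M] [AddCommMonoid N] [Module ℂ M] [Module ℂ N]

theorem list_sum_tmul {α : Type*} (l : List α) (f : α → M) (y : N) :
    ((l.map f).sum ⊗ₜ[ℂ] y) = (l.map fun a => f a ⊗ₜ[ℂ] y).sum := by
  induction l with
  | nil => simp
  | cons a l ih => simp [TensorProduct.add_tmul, ih]

theorem tmul_list_sum {α : Type*} (l : List α) (f : α → N) (x : M) :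
    (x ⊗ₜ[ℂ] (l.map f).sum) = (l.map fun a => x ⊗ₜ[ℂ] f a).sum := by
  induction l with
  | nil => simp
  | cons a l ih => simp [TensorProduct.tmul_add, ih]

omit [Module ℂ M] in
theorem list_sum_flatMap {α β : Type*} (l : List α) (g : α → List β) (f : β → M) :
    (((l.flatMap g).map f).sum) = (l.map fun a => ((g a).map f).sum).sum := by
  induction l with
  | nil => simp
  | cons a l ih => simp [ih]

end tensorsums

set_option synthInstance.maxHeartbeats 400000 in
theorem coassoc_tree (t : PBT) :
    (TensorProduct.assoc ℂ He He He)
        ((TensorProduct.map comulE.toLinearMap LinearMap.id) (comulETree t)) =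
      (TensorProduct.map LinearMap.id comulE.toLinearMap) (comulETree t) := by
  have hL : (TensorProduct.assoc ℂ He He He)
      ((TensorProduct.map comulE.toLinearMap LinearMap.id) (comulETree t)) =
      ((tcutsL t).map fun x =>
        ofTree x.1 ⊗ₜ[ℂ] (ofTree x.2.1 ⊗ₜ[ℂ] ofTree x.2.2)).sum := by
    rw [comulETree, map_list_sum, map_list_sum, List.map_map, List.map_map, tcutsL,
      list_sum_flatMap]
    congr 1
    refine List.map_congr_left fun p _ => ?_
    simp only [Function.comp_apply, TensorProduct.map_tmul, LinearMap.id_coe, id_eq,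
      AlgHom.toLinearMap_apply, comulE_ofTree, comulETree, list_sum_tmul,
      map_list_sum, List.map_map]
    refine congrArg _ (List.map_congr_left fun q _ => ?_)
    simp
  have hR : (TensorProduct.map LinearMap.id comulE.toLinearMap) (comulETree t) =
      ((tcutsR t).map fun x =>
        ofTree x.1 ⊗ₜ[ℂ] (ofTree x.2.1 ⊗ₜ[ℂ] ofTree x.2.2)).sum := by
    rw [comulETree, map_list_sum, List.map_map, tcutsR, list_sum_flatMap]
    congr 1
    refine List.map_congr_left fun p _ => ?_
    simp only [Function.comp_apply, TensorProduct.map_tmul, LinearMap.id_coe, id_eq,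
      AlgHom.toLinearMap_apply, comulE_ofTree, comulETree, tmul_list_sum, List.map_map]
    rfl
  rw [hL, hR]
  exact List.Perm.sum_eq ((tcuts_perm t).map _)
theorem algmap_toLinearMap {A B C D : Type*} [Semiring A] [Semiring B] [Semiring C]
    [Semiring D] [Algebra ℂ A] [Algebra ℂ B] [Algebra ℂ C] [Algebra ℂ D]
    (f : A →ₐ[ℂ] B) (g : C →ₐ[ℂ] D) :
    (Algebra.TensorProduct.map f g).toLinearMap =
      TensorProduct.map f.toLinearMap g.toLinearMap :=
  TensorProduct.ext' fun _ _ => rfl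

noncomputable def Phi1 : He →ₐ[ℂ] He ⊗[ℂ] (He ⊗[ℂ] He) :=
  ((Algebra.TensorProduct.assoc ℂ ℂ ℂ He He He).toAlgHom.comp
    (Algebra.TensorProduct.map comulE (AlgHom.id ℂ He))).comp comulE

noncomputable def Phi2 : He →ₐ[ℂ] He ⊗[ℂ] (He ⊗[ℂ] He) :=
  (Algebra.TensorProduct.map (AlgHom.id ℂ He) comulE).comp comulE

theorem phi1_apply (x : He) :
    Phi1 x = (TensorProduct.assoc ℂ He He He)
      ((TensorProduct.map comulE.toLinearMap LinearMap.id) (comulE x)) := by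
  have h : (Algebra.TensorProduct.map comulE (AlgHom.id ℂ He)) (comulE x) =
      (TensorProduct.map comulE.toLinearMap LinearMap.id) (comulE x) := by
    have := congrFun (congrArg DFunLike.coe (algmap_toLinearMap comulE (AlgHom.id ℂ He)))
      (comulE x)
    exact this
  simp only [Phi1, AlgHom.coe_comp, Function.comp_apply, AlgEquiv.toAlgHom_eq_coe,
    AlgHom.coe_coe, h]
  rfl

theorem phi2_apply (x : He) :
    Phi2 x = (TensorProduct.map LinearMap.id comulE.toLinearMap) (comulE x) := by
  have := congrFun (congrArg DFunLike.coe (algmap_toLinearMap (AlgHom.id ℂ He) comulE))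
    (comulE x)
  simp only [Phi2, AlgHom.coe_comp, Function.comp_apply]
  exact this

set_option synthInstance.maxHeartbeats 400000 in
theorem phi_eq : Phi1 = Phi2 := by
  apply MonoidAlgebra.algHom_ext _ (Subsingleton.elim _ _)
  intro w
  induction w using FreeMonoid.inductionOn' with
  | one => rw [← MonoidAlgebra.one_def]; exact Phi1.map_one'.trans Phi2.map_one'.symm
  | of_mul t w ih =>
    rw [← one_mul (1 : ℂ), ← MonoidAlgebra.single_mul_single, map_mul, map_mul, ih]
    congr 1
    rw [phi1_apply, phi2_apply, comulE_single_of]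
    exact coassoc_tree t.1

theorem coassoc_all (x : He) :
    (TensorProduct.assoc ℂ He He He)
        ((TensorProduct.map comulE.toLinearMap LinearMap.id) (comulE x)) =
      (TensorProduct.map LinearMap.id comulE.toLinearMap) (comulE x) := by
  rw [← phi1_apply, ← phi2_apply, phi_eq]
set_option synthInstance.maxHeartbeats 400000 in
theorem counit_tree_left (t : PBT) :
    (TensorProduct.lid ℂ He)
      ((TensorProduct.map counitE.toLinearMap LinearMap.id) (comulETree t)) = ofTree t := by
  rw [comulETree, map_list_sum, map_list_sum, List.map_map, List.map_map]
  rw [← ecuts_sum_fst_leaf t ofTree]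
  refine congrArg _ (List.map_congr_left fun p _ => ?_)
  simp only [Function.comp_apply, TensorProduct.map_tmul, AlgHom.toLinearMap_apply,
    LinearMap.id_coe, id_eq, TensorProduct.lid_tmul, counitE_ofTree]
  by_cases h : p.1 = PBT.leaf <;> simp [h]

set_option synthInstance.maxHeartbeats 400000 in
theorem counit_tree_right (t : PBT) :
    (TensorProduct.rid ℂ He)
      ((TensorProduct.map LinearMap.id counitE.toLinearMap) (comulETree t)) = ofTree t := by
  rw [comulETree, map_list_sum, map_list_sum, List.map_map, List.map_map]
  rw [← ecuts_sum_snd_leaf t ofTree]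
  refine congrArg _ (List.map_congr_left fun p _ => ?_)
  simp only [Function.comp_apply, TensorProduct.map_tmul, AlgHom.toLinearMap_apply,
    LinearMap.id_coe, id_eq, TensorProduct.rid_tmul, counitE_ofTree]
  by_cases h : p.2 = PBT.leaf <;> simp [h]

noncomputable def Psi1 : He →ₐ[ℂ] He :=
  ((Algebra.TensorProduct.lid ℂ He).toAlgHom.comp
    (Algebra.TensorProduct.map counitE (AlgHom.id ℂ He))).comp comulE

noncomputable def Psi2 : He →ₐ[ℂ] He :=
  ((Algebra.TensorProduct.rid ℂ ℂ He).toAlgHom.comp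
    (Algebra.TensorProduct.map (AlgHom.id ℂ He) counitE)).comp comulE

theorem psi1_apply (x : He) :
    Psi1 x = (TensorProduct.lid ℂ He)
      ((TensorProduct.map counitE.toLinearMap LinearMap.id) (comulE x)) := by
  have h : (Algebra.TensorProduct.map counitE (AlgHom.id ℂ He)) (comulE x) =
      (TensorProduct.map counitE.toLinearMap LinearMap.id) (comulE x) := by
    have := congrFun (congrArg DFunLike.coe (algmap_toLinearMap counitE (AlgHom.id ℂ He)))
      (comulE x)
    exact this
  simp only [Psi1, AlgHom.coe_comp, Function.comp_apply, AlgEquiv.toAlgHom_eq_coe,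
    AlgHom.coe_coe, h]
  rfl

theorem psi2_apply (x : He) :
    Psi2 x = (TensorProduct.rid ℂ He)
      ((TensorProduct.map LinearMap.id counitE.toLinearMap) (comulE x)) := by
  have h : (Algebra.TensorProduct.map (AlgHom.id ℂ He) counitE) (comulE x) =
      (TensorProduct.map LinearMap.id counitE.toLinearMap) (comulE x) := by
    have := congrFun (congrArg DFunLike.coe (algmap_toLinearMap (AlgHom.id ℂ He) counitE))
      (comulE x)
    exact this
  simp only [Psi2, AlgHom.coe_comp, Function.comp_apply, AlgEquiv.toAlgHom_eq_coe,
    AlgHom.coe_coe, h]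
  generalize (TensorProduct.map LinearMap.id counitE.toLinearMap) (comulE x) = y
  induction y using TensorProduct.induction_on with
  | zero => simp
  | tmul a c => simp [Algebra.TensorProduct.rid_tmul]
  | add a b ha hb => simp only [map_add, ha, hb]

theorem ofTree_ne (t : PBTne) : ofTree t.1 = MonoidAlgebra.single (FreeMonoid.of t) 1 := by
  rw [ofTree, dif_neg t.2]

theorem psi1_eq : Psi1 = AlgHom.id ℂ He := by
  apply MonoidAlgebra.algHom_ext _ (Subsingleton.elim _ _)
  intro w
  induction w using FreeMonoid.inductionOn' with
  | one => rw [← MonoidAlgebra.one_def, map_one, map_one]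
  | of_mul t w ih =>
    rw [← one_mul (1 : ℂ), ← MonoidAlgebra.single_mul_single, map_mul, map_mul, ih]
    congr 1
    rw [psi1_apply, comulE_single_of, counit_tree_left, ofTree_ne, AlgHom.coe_id, id_eq]

theorem psi2_eq : Psi2 = AlgHom.id ℂ He := by
  apply MonoidAlgebra.algHom_ext _ (Subsingleton.elim _ _)
  intro w
  induction w using FreeMonoid.inductionOn' with
  | one => rw [← MonoidAlgebra.one_def, map_one, map_one]
  | of_mul t w ih =>
    rw [← one_mul (1 : ℂ), ← MonoidAlgebra.single_mul_single, map_mul, map_mul, ih]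
    congr 1
    rw [psi2_apply, comulE_single_of, counit_tree_right, ofTree_ne, AlgHom.coe_id, id_eq]

theorem counit_left_all (x : He) :
    (TensorProduct.lid ℂ He)
      ((TensorProduct.map counitE.toLinearMap LinearMap.id) (comulE x)) = x := by
  rw [← psi1_apply, psi1_eq, AlgHom.coe_id, id_eq]

theorem counit_right_all (x : He) :
    (TensorProduct.rid ℂ He)
      ((TensorProduct.map LinearMap.id counitE.toLinearMap) (comulE x)) = x := by
  rw [← psi2_apply, psi2_eq, AlgHom.coe_id, id_eq]
/-- homogeneous component span of `He ⊗ He` -/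
noncomputable def Mspan (n : ℕ) : Submodule ℂ (He ⊗[ℂ] He) :=
  Submodule.span ℂ {x : He ⊗[ℂ] He |
    ∃ w₁ w₂ : FreeMonoid PBTne, degWord w₁ + degWord w₂ = n ∧
      x = MonoidAlgebra.single w₁ (1 : ℂ) ⊗ₜ[ℂ] MonoidAlgebra.single w₂ 1}

/-- homogeneous with positive degree on the right factor -/
noncomputable def MspanR (n : ℕ) : Submodule ℂ (He ⊗[ℂ] He) :=
  Submodule.span ℂ {x : He ⊗[ℂ] He |
    ∃ w₁ w₂ : FreeMonoid PBTne, degWord w₁ + degWord w₂ = n ∧ 1 ≤ degWord w₂ ∧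
      x = MonoidAlgebra.single w₁ (1 : ℂ) ⊗ₜ[ℂ] MonoidAlgebra.single w₂ 1}

/-- homogeneous with positive degree on the left factor -/
noncomputable def MspanL (n : ℕ) : Submodule ℂ (He ⊗[ℂ] He) :=
  Submodule.span ℂ {x : He ⊗[ℂ] He |
    ∃ w₁ w₂ : FreeMonoid PBTne, degWord w₁ + degWord w₂ = n ∧ 1 ≤ degWord w₁ ∧
      x = MonoidAlgebra.single w₁ (1 : ℂ) ⊗ₜ[ℂ] MonoidAlgebra.single w₂ 1}

theorem degWord_mul (u v : FreeMonoid PBTne) :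
    degWord (u * v) = degWord u + degWord v := by
  simp [degWord, FreeMonoid.toList_mul]

theorem degWord_of (t : PBTne) : degWord (FreeMonoid.of t) = t.1.order := by
  simp [degWord, FreeMonoid.toList_of]

theorem degWord_one : degWord 1 = 0 := rfl

theorem gen_mul_gen (u₁ v₁ u₂ v₂ : FreeMonoid PBTne) :
    (MonoidAlgebra.single u₁ (1:ℂ) ⊗ₜ[ℂ] MonoidAlgebra.single v₁ (1:ℂ)) *
      (MonoidAlgebra.single u₂ (1:ℂ) ⊗ₜ[ℂ] MonoidAlgebra.single v₂ (1:ℂ)) =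
    MonoidAlgebra.single (u₁ * u₂) (1:ℂ) ⊗ₜ[ℂ] MonoidAlgebra.single (v₁ * v₂) (1:ℂ) := by
  rw [Algebra.TensorProduct.tmul_mul_tmul, MonoidAlgebra.single_mul_single,
    MonoidAlgebra.single_mul_single, one_mul]

theorem mul_mem_MM {m n : ℕ} {x y : He ⊗[ℂ] He} (hx : x ∈ Mspan m) (hy : y ∈ Mspan n) :
    x * y ∈ Mspan (m + n) := by
  have h := Submodule.mul_mem_mul hx hy
  simp only [Mspan, MspanR, MspanL] at h
  rw [Submodule.span_mul_span] at h
  refine Submodule.span_le.2 ?_ h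
  rintro z ⟨a, ⟨u₁, v₁, hd1, rfl⟩, b, ⟨u₂, v₂, hd2, rfl⟩, rfl⟩
  refine Submodule.subset_span ⟨u₁ * u₂, v₁ * v₂, ?_, by exact gen_mul_gen ..⟩
  rw [degWord_mul, degWord_mul]; omega

theorem mul_mem_RM {m n : ℕ} {x y : He ⊗[ℂ] He} (hx : x ∈ MspanR m) (hy : y ∈ Mspan n) :
    x * y ∈ MspanR (m + n) := by
  have h := Submodule.mul_mem_mul hx hy
  simp only [Mspan, MspanR, MspanL] at h
  rw [Submodule.span_mul_span] at h
  refine Submodule.span_le.2 ?_ h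
  rintro z ⟨a, ⟨u₁, v₁, hd1, hp1, rfl⟩, b, ⟨u₂, v₂, hd2, rfl⟩, rfl⟩
  refine Submodule.subset_span ⟨u₁ * u₂, v₁ * v₂, ?_, ?_, by exact gen_mul_gen ..⟩
  · rw [degWord_mul, degWord_mul]; omega
  · rw [degWord_mul]; omega

theorem mul_mem_MR {m n : ℕ} {x y : He ⊗[ℂ] He} (hx : x ∈ Mspan m) (hy : y ∈ MspanR n) :
    x * y ∈ MspanR (m + n) := by
  have h := Submodule.mul_mem_mul hx hy
  simp only [Mspan, MspanR, MspanL] at h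
  rw [Submodule.span_mul_span] at h
  refine Submodule.span_le.2 ?_ h
  rintro z ⟨a, ⟨u₁, v₁, hd1, rfl⟩, b, ⟨u₂, v₂, hd2, hp2, rfl⟩, rfl⟩
  refine Submodule.subset_span ⟨u₁ * u₂, v₁ * v₂, ?_, ?_, by exact gen_mul_gen ..⟩
  · rw [degWord_mul, degWord_mul]; omega
  · rw [degWord_mul]; omega

theorem mul_mem_LM {m n : ℕ} {x y : He ⊗[ℂ] He} (hx : x ∈ MspanL m) (hy : y ∈ Mspan n) :
    x * y ∈ MspanL (m + n) := by
  have h := Submodule.mul_mem_mul hx hy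
  simp only [Mspan, MspanR, MspanL] at h
  rw [Submodule.span_mul_span] at h
  refine Submodule.span_le.2 ?_ h
  rintro z ⟨a, ⟨u₁, v₁, hd1, hp1, rfl⟩, b, ⟨u₂, v₂, hd2, rfl⟩, rfl⟩
  refine Submodule.subset_span ⟨u₁ * u₂, v₁ * v₂, ?_, ?_, by exact gen_mul_gen ..⟩
  · rw [degWord_mul, degWord_mul]; omega
  · rw [degWord_mul]; omega

theorem mul_mem_ML {m n : ℕ} {x y : He ⊗[ℂ] He} (hx : x ∈ Mspan m) (hy : y ∈ MspanL n) :
    x * y ∈ MspanL (m + n) := by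
  have h := Submodule.mul_mem_mul hx hy
  simp only [Mspan, MspanR, MspanL] at h
  rw [Submodule.span_mul_span] at h
  refine Submodule.span_le.2 ?_ h
  rintro z ⟨a, ⟨u₁, v₁, hd1, rfl⟩, b, ⟨u₂, v₂, hd2, hp2, rfl⟩, rfl⟩
  refine Submodule.subset_span ⟨u₁ * u₂, v₁ * v₂, ?_, ?_, by exact gen_mul_gen ..⟩
  · rw [degWord_mul, degWord_mul]; omega
  · rw [degWord_mul]; omega

theorem ofTree_word (a : PBT) :
    ∃ w : FreeMonoid PBTne, ofTree a = MonoidAlgebra.single w 1 ∧ degWord w = a.order := by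
  by_cases h : a = PBT.leaf
  · exact ⟨1, by simp [ofTree, h, MonoidAlgebra.one_def], by subst h; rfl⟩
  · exact ⟨FreeMonoid.of ⟨a, h⟩, by rw [ofTree, dif_neg h], degWord_of _⟩

theorem order_pos {t : PBT} (h : t ≠ PBT.leaf) : 1 ≤ t.order := by
  cases t with
  | leaf => exact absurd rfl h
  | node l r => simp [PBT.order]

theorem comulETree_mem (t : PBT) : comulETree t ∈ Mspan t.order := by
  rw [comulETree]
  refine list_sum_mem fun x hx => ?_
  simp only [List.mem_map] at hx
  obtain ⟨p, hp, rfl⟩ := hx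
  obtain ⟨w₁, h1, hd1⟩ := ofTree_word p.1
  obtain ⟨w₂, h2, hd2⟩ := ofTree_word p.2
  have horder : p.1.order + p.2.order = t.order := by
    rw [← (mem_ecuts t p).mp hp, under_order]
  exact Submodule.subset_span ⟨w₁, w₂, by omega, by rw [h1, h2]⟩

theorem list_sum_map_sub {α M : Type*} [AddCommGroup M] (l : List α) (f g : α → M) :
    (l.map f).sum - (l.map g).sum = (l.map fun a => f a - g a).sum := by
  induction l with
  | nil => simp
  | cons a l ih => simp only [List.map_cons, List.sum_cons, ← ih]; abel

theorem comulETree_sub_right (t : PBT) :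
    comulETree t - ofTree t ⊗ₜ[ℂ] 1 ∈ MspanR t.order := by
  rw [comulETree, ← ecuts_sum_snd_leaf t (fun a => ofTree a ⊗ₜ[ℂ] (1 : He)),
    list_sum_map_sub]
  refine list_sum_mem fun x hx => ?_
  simp only [List.mem_map] at hx
  obtain ⟨p, hp, rfl⟩ := hx
  have horder : p.1.order + p.2.order = t.order := by
    rw [← (mem_ecuts t p).mp hp, under_order]
  by_cases h : p.2 = PBT.leaf
  · rw [h]; simp [ofTree]
  · rw [if_neg h, sub_zero]
    obtain ⟨w₁, h1, hd1⟩ := ofTree_word p.1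
    obtain ⟨w₂, h2, hd2⟩ := ofTree_word p.2
    exact Submodule.subset_span ⟨w₁, w₂, by omega,
      by rw [hd2]; exact order_pos h, by rw [h1, h2]⟩

theorem comulETree_sub_left (t : PBT) :
    comulETree t - (1 : He) ⊗ₜ[ℂ] ofTree t ∈ MspanL t.order := by
  rw [comulETree, ← ecuts_sum_fst_leaf t (fun a => (1 : He) ⊗ₜ[ℂ] ofTree a),
    list_sum_map_sub]
  refine list_sum_mem fun x hx => ?_
  simp only [List.mem_map] at hx
  obtain ⟨p, hp, rfl⟩ := hx
  have horder : p.1.order + p.2.order = t.order := by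
    rw [← (mem_ecuts t p).mp hp, under_order]
  by_cases h : p.1 = PBT.leaf
  · rw [h]; simp [ofTree]
  · rw [if_neg h, sub_zero]
    obtain ⟨w₁, h1, hd1⟩ := ofTree_word p.1
    obtain ⟨w₂, h2, hd2⟩ := ofTree_word p.2
    exact Submodule.subset_span ⟨w₁, w₂, by omega,
      by rw [hd1]; exact order_pos h, by rw [h1, h2]⟩
theorem comul_single_mem (w : FreeMonoid PBTne) :
    comulE (MonoidAlgebra.single w (1:ℂ)) ∈ Mspan (degWord w) := by
  induction w using FreeMonoid.inductionOn' with
  | one =>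
    rw [← MonoidAlgebra.one_def, map_one]
    rw [Algebra.TensorProduct.one_def]
    exact Submodule.subset_span ⟨1, 1, rfl, by rw [← MonoidAlgebra.one_def]⟩
  | of_mul t w ih =>
    rw [← one_mul (1 : ℂ), ← MonoidAlgebra.single_mul_single, map_mul, comulE_single_of,
      degWord_mul, degWord_of]
    exact mul_mem_MM (comulETree_mem t.1) ih

theorem single_tmul_one_mem (w : FreeMonoid PBTne) :
    (MonoidAlgebra.single w (1:ℂ) ⊗ₜ[ℂ] (1 : He)) ∈ Mspan (degWord w) :=
  Submodule.subset_span ⟨w, 1, by simp [degWord_one], by rw [← MonoidAlgebra.one_def]⟩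

theorem one_tmul_single_mem (w : FreeMonoid PBTne) :
    ((1 : He) ⊗ₜ[ℂ] MonoidAlgebra.single w (1:ℂ)) ∈ Mspan (degWord w) :=
  Submodule.subset_span ⟨1, w, by simp [degWord_one], by rw [← MonoidAlgebra.one_def]⟩

theorem comul_single_sub_right (w : FreeMonoid PBTne) :
    comulE (MonoidAlgebra.single w (1:ℂ)) - MonoidAlgebra.single w (1:ℂ) ⊗ₜ[ℂ] (1 : He) ∈
      MspanR (degWord w) := by
  induction w using FreeMonoid.inductionOn' with
  | one =>
    rw [← MonoidAlgebra.one_def, map_one, Algebra.TensorProduct.one_def, sub_self]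
    exact Submodule.zero_mem _
  | of_mul t w ih =>
    rw [← one_mul (1 : ℂ), ← MonoidAlgebra.single_mul_single, map_mul, comulE_single_of]
    have hsplit :
        comulETree t.1 * comulE (MonoidAlgebra.single w 1) -
          (MonoidAlgebra.single (FreeMonoid.of t) 1 * MonoidAlgebra.single w 1) ⊗ₜ[ℂ] (1:He) =
        (comulETree t.1 - ofTree t.1 ⊗ₜ[ℂ] 1) * comulE (MonoidAlgebra.single w 1) +
          (MonoidAlgebra.single (FreeMonoid.of t) (1:ℂ) ⊗ₜ[ℂ] (1:He)) *
            (comulE (MonoidAlgebra.single w 1) - MonoidAlgebra.single w (1:ℂ) ⊗ₜ[ℂ] (1:He)) := by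
      rw [ofTree_ne, sub_mul, mul_sub, Algebra.TensorProduct.tmul_mul_tmul,
        MonoidAlgebra.single_mul_single, one_mul, one_mul]
      abel
    rw [hsplit, degWord_mul, degWord_of]
    exact Submodule.add_mem _
      (mul_mem_RM (comulETree_sub_right t.1) (comul_single_mem w))
      (mul_mem_MR (by simpa [degWord_of] using single_tmul_one_mem (FreeMonoid.of t)) ih)

theorem comul_single_sub_left (w : FreeMonoid PBTne) :
    comulE (MonoidAlgebra.single w (1:ℂ)) - (1 : He) ⊗ₜ[ℂ] MonoidAlgebra.single w (1:ℂ) ∈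
      MspanL (degWord w) := by
  induction w using FreeMonoid.inductionOn' with
  | one =>
    rw [← MonoidAlgebra.one_def, map_one, Algebra.TensorProduct.one_def, sub_self]
    exact Submodule.zero_mem _
  | of_mul t w ih =>
    rw [← one_mul (1 : ℂ), ← MonoidAlgebra.single_mul_single, map_mul, comulE_single_of]
    have hsplit :
        comulETree t.1 * comulE (MonoidAlgebra.single w 1) -
          (1:He) ⊗ₜ[ℂ] (MonoidAlgebra.single (FreeMonoid.of t) 1 * MonoidAlgebra.single w 1) =
        (comulETree t.1 - (1:He) ⊗ₜ[ℂ] ofTree t.1) * comulE (MonoidAlgebra.single w 1) +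
          ((1:He) ⊗ₜ[ℂ] MonoidAlgebra.single (FreeMonoid.of t) (1:ℂ)) *
            (comulE (MonoidAlgebra.single w 1) - (1:He) ⊗ₜ[ℂ] MonoidAlgebra.single w (1:ℂ)) := by
      rw [ofTree_ne, sub_mul, mul_sub, Algebra.TensorProduct.tmul_mul_tmul,
        MonoidAlgebra.single_mul_single, one_mul, one_mul]
      abel
    rw [hsplit, degWord_mul, degWord_of]
    exact Submodule.add_mem _
      (mul_mem_LM (comulETree_sub_left t.1) (comul_single_mem w))
      (mul_mem_ML (by simpa [degWord_of] using one_tmul_single_mem (FreeMonoid.of t)) ih)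

theorem degWord_eq_zero {w : FreeMonoid PBTne} (h : degWord w = 0) : w = 1 := by
  rcases w with _ | ⟨t, l⟩
  · rfl
  · exfalso
    have := order_pos t.2
    simp only [degWord] at h
    have : (FreeMonoid.toList (t :: l : List PBTne)) = t :: l := rfl
    rw [this] at h
    simp only [List.map_cons, List.sum_cons] at h
    omega
noncomputable def Bhe : Module.Basis (FreeMonoid PBTne) ℂ He := MonoidAlgebra.basis _ ℂ

theorem Bhe_apply (w : FreeMonoid PBTne) : Bhe w = MonoidAlgebra.single w 1 :=
  MonoidAlgebra.basis_apply ℂ w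

noncomputable def B2 : Module.Basis (FreeMonoid PBTne × FreeMonoid PBTne) ℂ (He ⊗[ℂ] He) :=
  Bhe.tensorProduct Bhe

theorem B2_apply (p : FreeMonoid PBTne × FreeMonoid PBTne) :
    B2 p = MonoidAlgebra.single p.1 (1:ℂ) ⊗ₜ[ℂ] MonoidAlgebra.single p.2 (1:ℂ) := by
  rw [B2, Module.Basis.tensorProduct_apply', Bhe_apply, Bhe_apply]

theorem MspanR_eq (n : ℕ) :
    MspanR n = Submodule.span ℂ
      (B2 '' {p | degWord p.1 + degWord p.2 = n ∧ 1 ≤ degWord p.2}) := by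
  rw [MspanR]
  congr 1
  ext x
  constructor
  · rintro ⟨w₁, w₂, hd, hp, rfl⟩
    exact ⟨(w₁, w₂), ⟨hd, hp⟩, (B2_apply _).symm ▸ rfl⟩
  · rintro ⟨p, ⟨hd, hp⟩, rfl⟩
    exact ⟨p.1, p.2, hd, hp, B2_apply p⟩

theorem MspanL_eq (n : ℕ) :
    MspanL n = Submodule.span ℂ
      (B2 '' {p | degWord p.1 + degWord p.2 = n ∧ 1 ≤ degWord p.1}) := by
  rw [MspanL]
  congr 1
  ext x
  constructor
  · rintro ⟨w₁, w₂, hd, hp, rfl⟩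
    exact ⟨(w₁, w₂), ⟨hd, hp⟩, (B2_apply _).symm ▸ rfl⟩
  · rintro ⟨p, ⟨hd, hp⟩, rfl⟩
    exact ⟨p.1, p.2, hd, hp, B2_apply p⟩

/-- right-reduced coproduct coefficients -/
noncomputable def cR (w : FreeMonoid PBTne) : (FreeMonoid PBTne × FreeMonoid PBTne) →₀ ℂ :=
  B2.repr (comulE (MonoidAlgebra.single w 1) - MonoidAlgebra.single w (1:ℂ) ⊗ₜ[ℂ] (1 : He))

/-- left-reduced coproduct coefficients -/
noncomputable def cL (w : FreeMonoid PBTne) : (FreeMonoid PBTne × FreeMonoid PBTne) →₀ ℂ :=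
  B2.repr (comulE (MonoidAlgebra.single w 1) - (1 : He) ⊗ₜ[ℂ] MonoidAlgebra.single w (1:ℂ))

theorem cR_supp {w : FreeMonoid PBTne} {p : FreeMonoid PBTne × FreeMonoid PBTne}
    (hp : p ∈ (cR w).support) : degWord p.1 < degWord w := by
  have h := comul_single_sub_right w
  rw [MspanR_eq, Module.Basis.mem_span_image] at h
  have := h (Finset.mem_coe.2 hp)
  obtain ⟨hd, hpos⟩ := this
  omega

theorem cL_supp {w : FreeMonoid PBTne} {p : FreeMonoid PBTne × FreeMonoid PBTne}
    (hp : p ∈ (cL w).support) : degWord p.2 < degWord w := by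
  have h := comul_single_sub_left w
  rw [MspanL_eq, Module.Basis.mem_span_image] at h
  have := h (Finset.mem_coe.2 hp)
  obtain ⟨hd, hpos⟩ := this
  omega

open scoped Classical in
noncomputable def Sword : FreeMonoid PBTne → He
  | w =>
    (if w = 1 then 1 else 0) -
      ∑ p ∈ (cR w).support.attach,
        cR w p.1 • (Sword p.1.1 * MonoidAlgebra.single p.1.2 1)
termination_by w => degWord w
decreasing_by exact cR_supp p.2

open scoped Classical in
noncomputable def Tword : FreeMonoid PBTne → He
  | w =>
    (if w = 1 then 1 else 0) -
      ∑ p ∈ (cL w).support.attach,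
        cL w p.1 • (MonoidAlgebra.single p.1.1 1 * Tword p.1.2)
termination_by w => degWord w
decreasing_by exact cL_supp p.2
open scoped Classical

noncomputable def convL (f g : He →ₗ[ℂ] He) : He →ₗ[ℂ] He :=
  LinearMap.mul' ℂ He ∘ₗ TensorProduct.map f g ∘ₗ comulE.toLinearMap

noncomputable def eL : He →ₗ[ℂ] He := Algebra.linearMap ℂ He ∘ₗ counitE.toLinearMap

theorem of_mul_ne_one (t : PBTne) (w : FreeMonoid PBTne) : FreeMonoid.of t * w ≠ 1 :=
  fun h => by simpa using congrArg (fun u => (FreeMonoid.toList u).length) h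

theorem counitE_single (w : FreeMonoid PBTne) :
    counitE (MonoidAlgebra.single w (1:ℂ)) = if w = 1 then 1 else 0 := by
  induction w using FreeMonoid.inductionOn' with
  | one => rw [← MonoidAlgebra.one_def, map_one, if_pos rfl]
  | of_mul t w ih =>
    rw [← one_mul (1:ℂ), ← MonoidAlgebra.single_mul_single, map_mul, counitE_single_of,
      zero_mul, if_neg (of_mul_ne_one t w)]

theorem eL_single (w : FreeMonoid PBTne) :
    eL (MonoidAlgebra.single w (1:ℂ)) = if w = 1 then 1 else 0 := by
  simp only [eL, LinearMap.comp_apply, AlgHom.toLinearMap_apply, counitE_single,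
    Algebra.linearMap_apply]
  split_ifs <;> simp [MonoidAlgebra.one_def]

noncomputable def Santi : He →ₗ[ℂ] He := Bhe.constr ℂ Sword
noncomputable def Tanti : He →ₗ[ℂ] He := Bhe.constr ℂ Tword

theorem Santi_single (w : FreeMonoid PBTne) :
    Santi (MonoidAlgebra.single w (1:ℂ)) = Sword w := by
  rw [← Bhe_apply]; exact Bhe.constr_basis ℂ Sword w

theorem Tanti_single (w : FreeMonoid PBTne) :
    Tanti (MonoidAlgebra.single w (1:ℂ)) = Tword w := by
  rw [← Bhe_apply]; exact Bhe.constr_basis ℂ Tword w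

theorem comul_single_decompR (w : FreeMonoid PBTne) :
    comulE (MonoidAlgebra.single w (1:ℂ)) =
      MonoidAlgebra.single w (1:ℂ) ⊗ₜ[ℂ] (1 : He) +
        ∑ p ∈ (cR w).support, cR w p • B2 p := by
  have h := B2.linearCombination_repr
    (comulE (MonoidAlgebra.single w 1) - MonoidAlgebra.single w (1:ℂ) ⊗ₜ[ℂ] (1 : He))
  rw [Finsupp.linearCombination_apply, Finsupp.sum] at h
  rw [show ((B2.repr (comulE (MonoidAlgebra.single w 1) -
      MonoidAlgebra.single w (1:ℂ) ⊗ₜ[ℂ] (1 : He)))) = cR w from rfl] at h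
  rw [h]; abel

theorem comul_single_decompL (w : FreeMonoid PBTne) :
    comulE (MonoidAlgebra.single w (1:ℂ)) =
      (1 : He) ⊗ₜ[ℂ] MonoidAlgebra.single w (1:ℂ) +
        ∑ p ∈ (cL w).support, cL w p • B2 p := by
  have h := B2.linearCombination_repr
    (comulE (MonoidAlgebra.single w 1) - (1 : He) ⊗ₜ[ℂ] MonoidAlgebra.single w (1:ℂ))
  rw [Finsupp.linearCombination_apply, Finsupp.sum] at h
  rw [show ((B2.repr (comulE (MonoidAlgebra.single w 1) -
      (1 : He) ⊗ₜ[ℂ] MonoidAlgebra.single w (1:ℂ)))) = cL w from rfl] at h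
  rw [h]; abel

theorem convSid_single (w : FreeMonoid PBTne) :
    convL Santi LinearMap.id (MonoidAlgebra.single w (1:ℂ)) = if w = 1 then 1 else 0 := by
  rw [convL, LinearMap.comp_apply, LinearMap.comp_apply, AlgHom.toLinearMap_apply,
    comul_single_decompR, map_add, map_add, map_sum, map_sum]
  have h1 : (LinearMap.mul' ℂ He)
      ((TensorProduct.map Santi LinearMap.id) (MonoidAlgebra.single w (1:ℂ) ⊗ₜ[ℂ] (1:He))) =
      Sword w := by
    rw [TensorProduct.map_tmul, LinearMap.mul'_apply, Santi_single, LinearMap.id_coe, id_eq,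
      mul_one]
  have h2 : ∀ p ∈ (cR w).support, (LinearMap.mul' ℂ He)
      ((TensorProduct.map Santi LinearMap.id) (cR w p • B2 p)) =
      cR w p • (Sword p.1 * MonoidAlgebra.single p.2 1) := by
    intro p _
    rw [map_smul, map_smul, B2_apply, TensorProduct.map_tmul, LinearMap.mul'_apply,
      Santi_single, LinearMap.id_coe, id_eq]
  rw [h1, Finset.sum_congr rfl h2]
  conv_lhs => rw [Sword]
  rw [Finset.sum_attach ((cR w).support)
    (fun p => cR w p • (Sword p.1 * MonoidAlgebra.single p.2 1))]
  abel

theorem convidT_single (w : FreeMonoid PBTne) :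
    convL LinearMap.id Tanti (MonoidAlgebra.single w (1:ℂ)) = if w = 1 then 1 else 0 := by
  rw [convL, LinearMap.comp_apply, LinearMap.comp_apply, AlgHom.toLinearMap_apply,
    comul_single_decompL, map_add, map_add, map_sum, map_sum]
  have h1 : (LinearMap.mul' ℂ He)
      ((TensorProduct.map LinearMap.id Tanti) ((1:He) ⊗ₜ[ℂ] MonoidAlgebra.single w (1:ℂ))) =
      Tword w := by
    rw [TensorProduct.map_tmul, LinearMap.mul'_apply, Tanti_single, LinearMap.id_coe, id_eq,
      one_mul]
  have h2 : ∀ p ∈ (cL w).support, (LinearMap.mul' ℂ He)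
      ((TensorProduct.map LinearMap.id Tanti) (cL w p • B2 p)) =
      cL w p • (MonoidAlgebra.single p.1 1 * Tword p.2) := by
    intro p _
    rw [map_smul, map_smul, B2_apply, TensorProduct.map_tmul, LinearMap.mul'_apply,
      Tanti_single, LinearMap.id_coe, id_eq]
  rw [h1, Finset.sum_congr rfl h2]
  conv_lhs => rw [Tword]
  rw [Finset.sum_attach ((cL w).support)
    (fun p => cL w p • (MonoidAlgebra.single p.1 1 * Tword p.2))]
  abel

theorem SconvId : convL Santi LinearMap.id = eL :=
  Bhe.ext fun w => by rw [Bhe_apply, convSid_single, eL_single]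

theorem IdconvT : convL LinearMap.id Tanti = eL :=
  Bhe.ext fun w => by rw [Bhe_apply, convidT_single, eL_single]
theorem coassoc_comp :
    TensorProduct.map LinearMap.id comulE.toLinearMap ∘ₗ comulE.toLinearMap =
      (TensorProduct.assoc ℂ He He He).toLinearMap ∘ₗ
        TensorProduct.map comulE.toLinearMap LinearMap.id ∘ₗ comulE.toLinearMap :=
  LinearMap.ext fun x => (coassoc_all x).symm

theorem convL_assoc (f g h : He →ₗ[ℂ] He) :
    convL (convL f g) h = convL f (convL g h) := by
  have e1 : TensorProduct.map (convL f g) h =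
      TensorProduct.map (LinearMap.mul' ℂ He) h ∘ₗ
        TensorProduct.map (TensorProduct.map f g) LinearMap.id ∘ₗ
          TensorProduct.map comulE.toLinearMap LinearMap.id := by
    rw [← TensorProduct.map_comp, ← TensorProduct.map_comp]
    rfl
  have e2 : TensorProduct.map f (convL g h) =
      TensorProduct.map LinearMap.id (LinearMap.mul' ℂ He) ∘ₗ
        TensorProduct.map f (TensorProduct.map g h) ∘ₗ
          TensorProduct.map LinearMap.id comulE.toLinearMap := by
    rw [← TensorProduct.map_comp, ← TensorProduct.map_comp]
    rfl
  have key : LinearMap.mul' ℂ He ∘ₗ TensorProduct.map (LinearMap.mul' ℂ He) h ∘ₗ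
      TensorProduct.map (TensorProduct.map f g) LinearMap.id =
      (LinearMap.mul' ℂ He ∘ₗ TensorProduct.map LinearMap.id (LinearMap.mul' ℂ He) ∘ₗ
        TensorProduct.map f (TensorProduct.map g h)) ∘ₗ
          (TensorProduct.assoc ℂ He He He).toLinearMap := by
    apply TensorProduct.ext_threefold
    intro a b c
    simp only [LinearMap.comp_apply, LinearEquiv.coe_coe, TensorProduct.assoc_tmul,
      TensorProduct.map_tmul, LinearMap.mul'_apply, LinearMap.id_coe, id_eq]
    rw [mul_assoc]
  calc convL (convL f g) h
      = LinearMap.mul' ℂ He ∘ₗ TensorProduct.map (convL f g) h ∘ₗ comulE.toLinearMap := rfl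
    _ = (LinearMap.mul' ℂ He ∘ₗ TensorProduct.map (LinearMap.mul' ℂ He) h ∘ₗ
          TensorProduct.map (TensorProduct.map f g) LinearMap.id) ∘ₗ
          (TensorProduct.map comulE.toLinearMap LinearMap.id ∘ₗ comulE.toLinearMap) := by
        rw [e1]; rfl
    _ = (LinearMap.mul' ℂ He ∘ₗ TensorProduct.map LinearMap.id (LinearMap.mul' ℂ He) ∘ₗ
          TensorProduct.map f (TensorProduct.map g h)) ∘ₗ
          ((TensorProduct.assoc ℂ He He He).toLinearMap ∘ₗ
            TensorProduct.map comulE.toLinearMap LinearMap.id ∘ₗ comulE.toLinearMap) := by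
        rw [key]; rfl
    _ = (LinearMap.mul' ℂ He ∘ₗ TensorProduct.map LinearMap.id (LinearMap.mul' ℂ He) ∘ₗ
          TensorProduct.map f (TensorProduct.map g h)) ∘ₗ
          (TensorProduct.map LinearMap.id comulE.toLinearMap ∘ₗ comulE.toLinearMap) := by
        rw [coassoc_comp]
    _ = convL f (convL g h) := by rw [convL, e2]; rfl

theorem convL_eL_left (f : He →ₗ[ℂ] He) : convL eL f = f := by
  have e : TensorProduct.map eL f =
      TensorProduct.map (Algebra.linearMap ℂ He) f ∘ₗ
        TensorProduct.map counitE.toLinearMap LinearMap.id := by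
    rw [← TensorProduct.map_comp]
    rfl
  have e2 : LinearMap.mul' ℂ He ∘ₗ TensorProduct.map (Algebra.linearMap ℂ He) f =
      f ∘ₗ (TensorProduct.lid ℂ He).toLinearMap := by
    apply TensorProduct.ext'
    intro c x
    simp only [LinearMap.comp_apply, TensorProduct.map_tmul, LinearMap.mul'_apply,
      Algebra.linearMap_apply, LinearEquiv.coe_coe, TensorProduct.lid_tmul, map_smul]
    rw [← Algebra.smul_def]
  have e3 : (TensorProduct.lid ℂ He).toLinearMap ∘ₗ
      TensorProduct.map counitE.toLinearMap LinearMap.id ∘ₗ comulE.toLinearMap =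
      LinearMap.id := LinearMap.ext fun x => counit_left_all x
  calc convL eL f
      = (LinearMap.mul' ℂ He ∘ₗ TensorProduct.map (Algebra.linearMap ℂ He) f) ∘ₗ
          (TensorProduct.map counitE.toLinearMap LinearMap.id ∘ₗ comulE.toLinearMap) := by
        rw [convL, e]; rfl
    _ = f ∘ₗ ((TensorProduct.lid ℂ He).toLinearMap ∘ₗ
          TensorProduct.map counitE.toLinearMap LinearMap.id ∘ₗ comulE.toLinearMap) := by
        rw [e2]; rfl
    _ = f := by rw [e3, LinearMap.comp_id]

theorem convL_eL_right (f : He →ₗ[ℂ] He) : convL f eL = f := by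
  have e : TensorProduct.map f eL =
      TensorProduct.map f (Algebra.linearMap ℂ He) ∘ₗ
        TensorProduct.map LinearMap.id counitE.toLinearMap := by
    rw [← TensorProduct.map_comp]
    rfl
  have e2 : LinearMap.mul' ℂ He ∘ₗ TensorProduct.map f (Algebra.linearMap ℂ He) =
      f ∘ₗ (TensorProduct.rid ℂ He).toLinearMap := by
    apply TensorProduct.ext'
    intro x c
    simp only [LinearMap.comp_apply, TensorProduct.map_tmul, LinearMap.mul'_apply,
      Algebra.linearMap_apply, LinearEquiv.coe_coe, TensorProduct.rid_tmul, map_smul]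
    rw [Algebra.smul_def, ← Algebra.commutes]
  have e3 : (TensorProduct.rid ℂ He).toLinearMap ∘ₗ
      TensorProduct.map LinearMap.id counitE.toLinearMap ∘ₗ comulE.toLinearMap =
      LinearMap.id := LinearMap.ext fun x => counit_right_all x
  calc convL f eL
      = (LinearMap.mul' ℂ He ∘ₗ TensorProduct.map f (Algebra.linearMap ℂ He)) ∘ₗ
          (TensorProduct.map LinearMap.id counitE.toLinearMap ∘ₗ comulE.toLinearMap) := by
        rw [convL, e]; rfl
    _ = f ∘ₗ ((TensorProduct.rid ℂ He).toLinearMap ∘ₗ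
          TensorProduct.map LinearMap.id counitE.toLinearMap ∘ₗ comulE.toLinearMap) := by
        rw [e2]; rfl
    _ = f := by rw [e3, LinearMap.comp_id]

theorem S_eq_T : Santi = Tanti := by
  calc Santi = convL Santi eL := (convL_eL_right Santi).symm
    _ = convL Santi (convL LinearMap.id Tanti) := by rw [IdconvT]
    _ = convL (convL Santi LinearMap.id) Tanti := (convL_assoc ..).symm
    _ = convL eL Tanti := by rw [SconvId]
    _ = Tanti := convL_eL_left Tanti

theorem IdconvS : convL LinearMap.id Santi = eL := by rw [S_eq_T, IdconvT]
theorem antipode_left (x : He) :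
    (LinearMap.mul' ℂ He) ((TensorProduct.map Santi LinearMap.id) (comulE x)) =
      algebraMap ℂ He (counitE x) := by
  have h := congrFun (congrArg DFunLike.coe SconvId) x
  simpa [convL, eL] using h

theorem antipode_right (x : He) :
    (LinearMap.mul' ℂ He) ((TensorProduct.map LinearMap.id Santi) (comulE x)) =
      algebraMap ℂ He (counitE x) := by
  have h := congrFun (congrArg DFunLike.coe IdconvS) x
  simpa [convL, eL] using h

/-- The coproduct Δ^p_e, dual to the `under` product on planar binary trees (the list
`ecuts t` enumerates exactly, and without repetition, the decompositions t = t₁ \ t₂)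
and extended multiplicatively, is coassociative and makes the free associative algebra
H^e = ℂ⟨Y⟩/(1 − ∥) into a graded connected Hopf algebra: Δ^p_e is a coassociative
algebra morphism with counit ε, an antipode exists, Δ^p_e respects the grading by the
total order of trees, and the only word of degree 0 is the unit. -/
theorem He_hopf_algebra :
    -- ecuts is exactly dual to the `under` product
    (∀ (t : PBT) (p : PBT × PBT), p ∈ ecuts t ↔ under p.1 p.2 = t) ∧
    (∀ t : PBT, (ecuts t).Nodup) ∧
    -- coassociativity of Δ^p_e
    (∀ x : He,
      (TensorProduct.assoc ℂ He He He)
          ((TensorProduct.map comulE.toLinearMap LinearMap.id) (comulE x)) =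
        (TensorProduct.map LinearMap.id comulE.toLinearMap) (comulE x)) ∧
    -- counit axioms
    (∀ x : He,
      (TensorProduct.lid ℂ He)
          ((TensorProduct.map counitE.toLinearMap LinearMap.id) (comulE x)) = x) ∧
    (∀ x : He,
      (TensorProduct.rid ℂ He)
          ((TensorProduct.map LinearMap.id counitE.toLinearMap) (comulE x)) = x) ∧
    -- existence of the antipode
    (∃ S : He →ₗ[ℂ] He,
      (∀ x : He,
        (LinearMap.mul' ℂ He) ((TensorProduct.map S LinearMap.id) (comulE x)) =
          algebraMap ℂ He (counitE x)) ∧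
      (∀ x : He,
        (LinearMap.mul' ℂ He) ((TensorProduct.map LinearMap.id S) (comulE x)) =
          algebraMap ℂ He (counitE x))) ∧
    -- the coproduct is graded
    (∀ w : FreeMonoid PBTne,
      comulE (MonoidAlgebra.single w 1) ∈
        Submodule.span ℂ {x : He ⊗[ℂ] He |
          ∃ w₁ w₂ : FreeMonoid PBTne, degWord w₁ + degWord w₂ = degWord w ∧
            x = MonoidAlgebra.single w₁ (1 : ℂ) ⊗ₜ[ℂ] MonoidAlgebra.single w₂ 1}) ∧
    -- connectedness: the only word of degree 0 is the empty word
    (∀ w : FreeMonoid PBTne, degWord w = 0 → w = 1) :=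
  ⟨mem_ecuts, ecuts_nodup, coassoc_all, counit_left_all, counit_right_all,
    ⟨Santi, antipode_left, antipode_right⟩,
    fun w => comul_single_mem w, fun _ h => degWord_eq_zero h⟩
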